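/- arXiv:2511.05011 — 3 statements merged into one kernel-verified Lean document; each statement's English description precedes it below -/
import Mathlib

section
/- Let 0 < ρ < 1 and let v be continuous on [0,T] and differentiable on (0,T), with its Caputo derivative D^ρ v continuous on [0,T]. (a) If t₀ ∈ (0,T] is a point where v attains its maximum over [0,T], then D^ρ v(t₀) ≥ 0. (b) If t₀ ∈ (0,T] is a point where v attains its minimum over [0,T], then D^ρ v(t₀) ≤ 0. -/
open Real Set MeasureTheory

/-- The Caputo fractional derivative of order `ρ`:
`D^ρ h(t) = (1/Γ(1-ρ)) ∫₀^t h'(η) (t-η)^{-ρ} dη`. -/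
noncomputable def caputo (ρ : ℝ) (h : ℝ → ℝ) (t : ℝ) : ℝ :=
  (1 / Real.Gamma (1 - ρ)) * ∫ η in (0:ℝ)..t, deriv h η * (t - η) ^ (-ρ)

open intervalIntegral Filter Topology

/-! Let `t` be a maximum point of `v` and split `∫₀^t v'(η) (t-η)^{-ρ} dη` at some `s < t`.
Integrating by parts against `v - v t ≤ 0` and the increasing kernel bounds the integral over
`[0,s]` from below by `(v s - v t) (t-s)^{-ρ}`. Since the kernel is at least `(t-s)^{-ρ}` on
`[s,t)`, both this boundary term and the integral over `[s,t]` are bounded in absolute value by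
`∫ₛ^t |v'(η)| (t-η)^{-ρ} dη`, which tends to `0` as `s → t`. -/

section RiemannLiouvilleKernel

variable {g v : ℝ → ℝ} {ρ a s t η : ℝ}

lemma hasDerivAt_sub_rpow_neg (hη : η < t) :
    HasDerivAt (fun x => (t - x) ^ (-ρ)) (ρ * (t - η) ^ (-ρ - 1)) η := by
  convert ((hasDerivAt_id' η).const_sub t).rpow_const (p := -ρ) (Or.inl (sub_pos.2 hη).ne')
    using 1
  ring

lemma IntervalIntegrable.of_mul_sub_rpow_neg (hρ : 0 ≤ ρ) (hst : s ≤ t)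
    (h : IntervalIntegrable (fun η => g η * (t - η) ^ (-ρ)) volume s t) :
    IntervalIntegrable g volume s t := by
  have hw : ContinuousOn (fun η => (t - η) ^ ρ) (uIcc s t) :=
    (continuousOn_const.sub continuousOn_id).rpow_const fun _ _ => Or.inr hρ
  refine (intervalIntegrable_iff_integrableOn_Ioo_of_le hst).2 ?_
  refine ((intervalIntegrable_iff_integrableOn_Ioo_of_le hst).1 (h.mul_continuousOn hw)).congr_fun
    (fun η hη => ?_) measurableSet_Ioo
  dsimp only
  have hpos : 0 < t - η := sub_pos.2 hη.2
  rw [mul_assoc, ← rpow_add hpos, neg_add_cancel, rpow_zero, mul_one]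


lemma sub_mul_sub_rpow_neg_le_integral (hρ : 0 ≤ ρ) (has : a ≤ s) (hst : s < t)
    (hv : ContinuousOn v (Icc a s)) (hv' : DifferentiableOn ℝ v (Ioo a s))
    (hmax : ∀ x ∈ Icc a s, v x ≤ v t)
    (hint : IntervalIntegrable (fun η => deriv v η * (t - η) ^ (-ρ)) volume a s) :
    (v s - v t) * (t - s) ^ (-ρ) ≤ ∫ η in a..s, deriv v η * (t - η) ^ (-ρ) := by
  set P : ℝ → ℝ := fun η => (v η - v t) * (t - η) ^ (-ρ)
  set c : ℝ → ℝ := fun η => (v η - v t) * (ρ * (t - η) ^ (-ρ - 1))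
  have hlt : ∀ x ∈ Icc a s, x < t := fun x hx => hx.2.trans_lt hst
  have hP : ∀ x ∈ Ioo a s, HasDerivAt P (deriv v x * (t - x) ^ (-ρ) + c x) x := fun x hx =>
    ((hv'.differentiableAt (Ioo_mem_nhds hx.1 hx.2)).hasDerivAt.sub_const (v t)).mul
      (hasDerivAt_sub_rpow_neg (hlt x (Ioo_subset_Icc_self hx)))
  have hc : ContinuousOn c (Icc a s) :=
    (hv.sub continuousOn_const).mul <| continuousOn_const.mul <|
      (continuousOn_const.sub continuousOn_id).rpow_const fun x hx =>
        Or.inl (sub_pos.2 (hlt x hx)).ne'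
  have hPcont : ContinuousOn P (Icc a s) :=
    (hv.sub continuousOn_const).mul <|
      (continuousOn_const.sub continuousOn_id).rpow_const fun x hx =>
        Or.inl (sub_pos.2 (hlt x hx)).ne'
  have hcint : IntervalIntegrable c volume a s := hc.intervalIntegrable_of_Icc has
  have hftc := integral_eq_sub_of_hasDerivAt_of_le has hPcont hP (hint.add hcint)
  rw [integral_add hint hcint] at hftc
  have hc_nonpos : ∫ η in a..s, c η ≤ ∫ _ in a..s, (0 : ℝ) :=
    integral_mono_on has hcint intervalIntegrable_const fun x hx => mul_nonpos_of_nonpos_of_nonneg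
      (sub_nonpos.2 (hmax x hx)) (mul_nonneg hρ (rpow_nonneg (sub_pos.2 (hlt x hx)).le _))
  rw [intervalIntegral.integral_zero] at hc_nonpos
  have hPa : P a ≤ 0 := mul_nonpos_of_nonpos_of_nonneg (sub_nonpos.2 (hmax a ⟨le_rfl, has⟩))
    (rpow_nonneg (sub_pos.2 (hlt a ⟨le_rfl, has⟩)).le _)
  change P s ≤ _
  linarith

lemma sub_mul_sub_rpow_neg_le_integral_abs (hρ : 0 ≤ ρ) (hst : s < t)
    (hv : ContinuousOn v (Icc s t)) (hv' : DifferentiableOn ℝ v (Ioo s t))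
    (hint : IntervalIntegrable (fun η => deriv v η * (t - η) ^ (-ρ)) volume s t) :
    (v t - v s) * (t - s) ^ (-ρ) ≤ ∫ η in s..t, |deriv v η * (t - η) ^ (-ρ)| := by
  have hderiv := hint.of_mul_sub_rpow_neg hρ hst.le
  rw [← integral_eq_sub_of_hasDerivAt_of_le hst.le hv
    (fun x hx => (hv'.differentiableAt (Ioo_mem_nhds hx.1 hx.2)).hasDerivAt) hderiv,
    ← intervalIntegral.integral_mul_const]
  refine integral_mono_on_of_le_Ioo hst.le (hderiv.mul_const _) hint.abs fun η hη => ?_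
  have hpos : 0 < t - η := sub_pos.2 hη.2
  calc deriv v η * (t - s) ^ (-ρ)
      ≤ |deriv v η| * (t - s) ^ (-ρ) :=
        mul_le_mul_of_nonneg_right (le_abs_self _) (rpow_nonneg (sub_pos.2 hst).le _)
    _ ≤ |deriv v η| * (t - η) ^ (-ρ) :=
        mul_le_mul_of_nonneg_left (rpow_le_rpow_of_nonpos hpos (by linarith [hη.1])
          (neg_nonpos.2 hρ)) (abs_nonneg _)
    _ = |deriv v η * (t - η) ^ (-ρ)| := by rw [abs_mul, abs_of_nonneg (rpow_nonneg hpos.le _)]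


lemma neg_two_mul_integral_abs_le_integral_deriv_mul_sub_rpow_neg (hρ : 0 ≤ ρ) (has : a ≤ s)
    (hst : s < t) (hv : ContinuousOn v (Icc a t)) (hv' : DifferentiableOn ℝ v (Ioo a t))
    (hmax : IsMaxOn v (Icc a t) t)
    (hint : IntervalIntegrable (fun η => deriv v η * (t - η) ^ (-ρ)) volume a t) :
    -(2 * ∫ η in s..t, |deriv v η * (t - η) ^ (-ρ)|) ≤
      ∫ η in a..t, deriv v η * (t - η) ^ (-ρ) := by
  have hs : s ∈ uIcc a t := mem_uIcc_of_le has hst.le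
  have hint₁ := hint.mono_set (uIcc_subset_uIcc left_mem_uIcc hs)
  have hint₂ := hint.mono_set (uIcc_subset_uIcc hs right_mem_uIcc)
  have hhead := sub_mul_sub_rpow_neg_le_integral hρ has hst
    (hv.mono (Icc_subset_Icc_right hst.le)) (hv'.mono (Ioo_subset_Ioo_right hst.le))
    (fun x hx => isMaxOn_iff.1 hmax x (Icc_subset_Icc_right hst.le hx)) hint₁
  have hjump := sub_mul_sub_rpow_neg_le_integral_abs hρ hst
    (hv.mono (Icc_subset_Icc_left has)) (hv'.mono (Ioo_subset_Ioo_left has)) hint₂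
  have htail := neg_abs_le (∫ η in s..t, deriv v η * (t - η) ^ (-ρ))
  have habs := abs_integral_le_integral_abs (μ := volume)
    (f := fun η => deriv v η * (t - η) ^ (-ρ)) hst.le
  rw [← integral_add_adjacent_intervals hint₁ hint₂]
  linarith

lemma integral_deriv_mul_sub_rpow_neg_nonneg (hρ : 0 ≤ ρ) (hat : a < t)
    (hv : ContinuousOn v (Icc a t)) (hv' : DifferentiableOn ℝ v (Ioo a t))
    (hmax : IsMaxOn v (Icc a t) t) :
    0 ≤ ∫ η in a..t, deriv v η * (t - η) ^ (-ρ) := by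
  by_cases hint : IntervalIntegrable (fun η => deriv v η * (t - η) ^ (-ρ)) volume a t
  swap
  · rw [integral_undef hint]
  have htail : Tendsto (fun s => ∫ η in s..t, |deriv v η * (t - η) ^ (-ρ)|) (𝓝[<] t) (𝓝 0) := by
    have hcont := continuousOn_primitive_interval_left
      ((intervalIntegrable_iff' (μ := volume)).1 hint.abs) t right_mem_uIcc
    have hlim := hcont.tendsto
    rw [integral_same] at hlim
    refine hlim.mono_left (nhdsWithin_le_of_mem ?_)
    exact mem_of_superset (Ioo_mem_nhdsLT hat) (uIcc_of_le hat.le ▸ Ioo_subset_Icc_self)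
  have hbound : ∀ᶠ s in 𝓝[<] t, -(2 * ∫ η in s..t, |deriv v η * (t - η) ^ (-ρ)|) ≤
      ∫ η in a..t, deriv v η * (t - η) ^ (-ρ) :=
    eventually_of_mem (Ioo_mem_nhdsLT hat) fun s hs =>
      neg_two_mul_integral_abs_le_integral_deriv_mul_sub_rpow_neg hρ hs.1.le hs.2 hv hv' hmax hint
  simpa using le_of_tendsto (htail.const_mul 2).neg hbound

end RiemannLiouvilleKernel

section Caputo

variable {v : ℝ → ℝ} {ρ t : ℝ}

lemma caputo_neg : caputo ρ (-v) t = -caputo ρ v t := by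
  simp only [caputo, deriv.neg', neg_mul, intervalIntegral.integral_neg, mul_neg]

lemma caputo_nonneg_of_isMaxOn (hρ₀ : 0 ≤ ρ) (hρ₁ : ρ < 1) (ht : 0 < t)
    (hv : ContinuousOn v (Icc 0 t)) (hv' : DifferentiableOn ℝ v (Ioo 0 t))
    (hmax : IsMaxOn v (Icc 0 t) t) : 0 ≤ caputo ρ v t :=
  mul_nonneg (one_div_nonneg.2 (Gamma_pos_of_pos (sub_pos.2 hρ₁)).le)
    (integral_deriv_mul_sub_rpow_neg_nonneg hρ₀ ht hv hv' hmax)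

lemma caputo_nonpos_of_isMinOn (hρ₀ : 0 ≤ ρ) (hρ₁ : ρ < 1) (ht : 0 < t)
    (hv : ContinuousOn v (Icc 0 t)) (hv' : DifferentiableOn ℝ v (Ioo 0 t))
    (hmin : IsMinOn v (Icc 0 t) t) : caputo ρ v t ≤ 0 := by
  simpa [caputo_neg] using caputo_nonneg_of_isMaxOn hρ₀ hρ₁ ht hv.neg hv'.neg hmin.neg

end Caputo

theorem caputo_extremum_principle_general (ρ T : ℝ) (hρ₀ : 0 < ρ) (hρ₁ : ρ < 1)
    (v : ℝ → ℝ) (hv : ContinuousOn v (Set.Icc 0 T))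
    (hv' : DifferentiableOn ℝ v (Set.Ioo 0 T))
    (t₀ : ℝ) (ht₀ : t₀ ∈ Set.Ioc 0 T) :
    ((∀ t ∈ Set.Icc 0 T, v t ≤ v t₀) → 0 ≤ caputo ρ v t₀) ∧
    ((∀ t ∈ Set.Icc 0 T, v t₀ ≤ v t) → caputo ρ v t₀ ≤ 0) := by
  have hsub : Icc 0 t₀ ⊆ Icc 0 T := Icc_subset_Icc_right ht₀.2
  have hv₀ : ContinuousOn v (Icc 0 t₀) := hv.mono hsub
  have hv₀' : DifferentiableOn ℝ v (Ioo 0 t₀) := hv'.mono (Ioo_subset_Ioo_right ht₀.2)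
  exact ⟨fun hmax => caputo_nonneg_of_isMaxOn hρ₀.le hρ₁ ht₀.1 hv₀ hv₀'
      ((isMaxOn_iff.2 hmax).on_subset hsub),
    fun hmin => caputo_nonpos_of_isMinOn hρ₀.le hρ₁ ht₀.1 hv₀ hv₀'
      ((isMinOn_iff.2 hmin).on_subset hsub)⟩

/-- Let `0 < ρ < 1` and let `v` be continuous on `[0,T]`, differentiable on `(0,T)`, with
Caputo derivative `D^ρ v` continuous on `[0,T]`.
(a) If `t₀ ∈ (0,T]` is a maximum point of `v` over `[0,T]`, then `D^ρ v(t₀) ≥ 0`.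
(b) If `t₀ ∈ (0,T]` is a minimum point of `v` over `[0,T]`, then `D^ρ v(t₀) ≤ 0`. -/
theorem caputo_extremum_principle (ρ T : ℝ) (hρ₀ : 0 < ρ) (hρ₁ : ρ < 1) (hT : 0 < T)
    (v : ℝ → ℝ) (hv : ContinuousOn v (Set.Icc 0 T))
    (hv' : DifferentiableOn ℝ v (Set.Ioo 0 T))
    (hcap : ContinuousOn (caputo ρ v) (Set.Icc 0 T))
    (t₀ : ℝ) (ht₀ : t₀ ∈ Set.Ioc 0 T) :
    ((∀ t ∈ Set.Icc 0 T, v t ≤ v t₀) → 0 ≤ caputo ρ v t₀) ∧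
    ((∀ t ∈ Set.Icc 0 T, v t₀ ≤ v t) → caputo ρ v t₀ ≤ 0) :=
  caputo_extremum_principle_general ρ T hρ₀ hρ₁ v hv hv' t₀ ht₀
end

section
/- Let l > 0, T > 0, and let f : [0,l] × [0,T] → ℝ be continuous, three times continuously differentiable in x with ∂³f/∂x³ continuous on [0,l] × [0,T], and satisfy f(0,t) = f(l,t) = ∂²f/∂x²(0,t) = ∂²f/∂x²(l,t) = 0 for all t ∈ [0,T]. Then for every t ∈ [0,T], ∑_{k=1}^∞ λ_k² |f_k(t)| ≤ (l/√6) · sup_{s∈[0,T]} (∫₀^l |∂³f/∂x³(x,s)|² dx)^{1/2}. -/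
open Real Set MeasureTheory intervalIntegral

/-!
Let `g_k` be the cosine coefficients of `∂³f/∂x³`. In three integrations by parts every boundary
term vanishes (`f` and `∂²f/∂x²` vanish at `0` and `l`, and so does `sin (λ_k x)`), which gives
`λ_k² |f_k| = |g_k| / λ_k`. By Cauchy–Schwarz, `∑ |g_k| / λ_k ≤ (∑ λ_k⁻²)^{1/2} (∑ g_k²)^{1/2}`.
Since `ζ(2) = π²/6`, the first factor is `l/√6`. The functions `√(2/l) cos (λ_k x)` are orthonormal
on `[0,l]`, so Bessel's inequality bounds the second factor by `‖∂³f/∂x³(·,t)‖_{L²}`, which is at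
most the supremum over `t`.
-/

theorem hasDerivWithinAt_iteratedDerivWithin {n : WithTop ℕ∞} {j : ℕ} {g : ℝ → ℝ} {s : Set ℝ}
    (hg : ContDiffOn ℝ n g s) (hj : (j : WithTop ℕ∞) < n) (hs : UniqueDiffOn ℝ s) {x : ℝ}
    (hx : x ∈ s) :
    HasDerivWithinAt (iteratedDerivWithin j g s) (iteratedDerivWithin (j + 1) g s x) s x := by
  rw [iteratedDerivWithin_succ]
  exact (hg.differentiableOn_iteratedDerivWithin hj hs x hx).hasDerivWithinAt

section IntegrationByParts

variable {a b c : ℝ} {u u' : ℝ → ℝ}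

theorem integral_mul_sin_eq_of_eq_zero (hab : a ≤ b) (hc : c ≠ 0)
    (hu : ∀ x ∈ Icc a b, HasDerivWithinAt u (u' x) (Icc a b) x)
    (hu' : IntervalIntegrable u' volume a b) (ha : u a = 0) (hb : u b = 0) :
    ∫ x in a..b, u x * sin (c * x) = c⁻¹ * ∫ x in a..b, u' x * cos (c * x) := by
  have hv : ∀ x, HasDerivAt (fun y => -cos (c * y) / c) (sin (c * x)) x := fun x => by
    refine (((hasDerivAt_id' x).const_mul c).cos.neg.div_const c).congr_deriv ?_
    field_simp
  rw [← uIcc_of_le hab] at hu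
  rw [integral_mul_deriv_eq_deriv_mul_of_hasDerivWithinAt hu (fun x _ => (hv x).hasDerivWithinAt)
    hu' ((continuous_sin.comp (continuous_const_mul c)).intervalIntegrable a b), ha, hb,
    ← intervalIntegral.integral_const_mul]
  simp only [zero_mul, sub_zero, zero_sub, ← intervalIntegral.integral_neg]
  congr 1 with x
  field_simp

theorem integral_mul_cos_eq_of_sin_eq_zero (hab : a ≤ b) (hc : c ≠ 0)
    (hu : ∀ x ∈ Icc a b, HasDerivWithinAt u (u' x) (Icc a b) x)
    (hu' : IntervalIntegrable u' volume a b) (ha : sin (c * a) = 0) (hb : sin (c * b) = 0) :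
    ∫ x in a..b, u x * cos (c * x) = -c⁻¹ * ∫ x in a..b, u' x * sin (c * x) := by
  have hv : ∀ x, HasDerivAt (fun y => sin (c * y) / c) (cos (c * x)) x := fun x => by
    refine (((hasDerivAt_id' x).const_mul c).sin.div_const c).congr_deriv ?_
    field_simp
  rw [← uIcc_of_le hab] at hu
  rw [integral_mul_deriv_eq_deriv_mul_of_hasDerivWithinAt hu (fun x _ => (hv x).hasDerivWithinAt)
    hu' ((continuous_cos.comp (continuous_const_mul c)).intervalIntegrable a b), ha, hb,
    ← intervalIntegral.integral_const_mul]
  simp only [zero_div, mul_zero, sub_zero, zero_sub, ← intervalIntegral.integral_neg]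
  congr 1 with x
  field_simp

theorem integral_mul_sin_eq_integral_iteratedDerivWithin_three_mul_cos {g : ℝ → ℝ} (hab : a < b)
    (hc : c ≠ 0) (hca : sin (c * a) = 0) (hcb : sin (c * b) = 0) (hg : ContDiffOn ℝ 3 g (Icc a b))
    (ha : g a = 0) (hb : g b = 0) (h2a : iteratedDerivWithin 2 g (Icc a b) a = 0)
    (h2b : iteratedDerivWithin 2 g (Icc a b) b = 0) :
    ∫ x in a..b, g x * sin (c * x)
      = -(c ^ 3)⁻¹ * ∫ x in a..b, iteratedDerivWithin 3 g (Icc a b) x * cos (c * x) := by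
  have hs := uniqueDiffOn_Icc hab
  have hD (j : ℕ) (hj : j < 3) (x) (hx : x ∈ Icc a b) :=
    hasDerivWithinAt_iteratedDerivWithin hg (by exact_mod_cast hj) hs hx
  have hI (j : ℕ) (hj : j ≤ 3) :
      IntervalIntegrable (iteratedDerivWithin j g (Icc a b)) volume a b :=
    ((hg.continuousOn_iteratedDerivWithin (by exact_mod_cast hj) hs).mono
      (uIcc_of_le hab.le).subset).intervalIntegrable
  rw [integral_mul_sin_eq_of_eq_zero hab.le hc (by simpa using hD 0) (hI 1 (by norm_num)) ha hb,
    integral_mul_cos_eq_of_sin_eq_zero hab.le hc (hD 1 (by norm_num)) (hI 2 (by norm_num)) hca hcb,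
    integral_mul_sin_eq_of_eq_zero hab.le hc (hD 2 (by norm_num)) (hI 3 le_rfl) h2a h2b]
  field_simp

end IntegrationByParts

section Bessel

variable {ι : Type*} {a b : ℝ} {e : ι → ℝ → ℝ}

theorem integral_mul_finsetSum {u : ℝ → ℝ} (hu : ContinuousOn u (uIcc a b))
    (he : ∀ i, ContinuousOn (e i) (uIcc a b)) (s : Finset ι) (c : ι → ℝ) :
    ∫ x in a..b, u x * ∑ i ∈ s, c i * e i x = ∑ i ∈ s, c i * ∫ x in a..b, u x * e i x := by
  simp_rw [Finset.mul_sum, mul_left_comm (u _)]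
  rw [intervalIntegral.integral_finsetSum (f := fun i x => c i * (u x * e i x)) fun i _ =>
    ((hu.mul (he i)).intervalIntegrable).const_mul (c i)]
  simp_rw [intervalIntegral.integral_const_mul]

theorem sum_sq_integral_mul_le_integral_sq (hab : a ≤ b) {h : ℝ → ℝ}
    (hh : ContinuousOn h (Icc a b)) (he : ∀ i, ContinuousOn (e i) (Icc a b))
    (hnorm : ∀ i, ∫ x in a..b, e i x * e i x = 1)
    (horth : Pairwise fun i j => ∫ x in a..b, e i x * e j x = 0) (s : Finset ι) :
    ∑ i ∈ s, (∫ x in a..b, h x * e i x) ^ 2 ≤ ∫ x in a..b, h x ^ 2 := by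
  rw [← uIcc_of_le hab] at hh he
  set c := fun i => ∫ x in a..b, h x * e i x
  set q := fun x => ∑ i ∈ s, c i * e i x
  have hq : ContinuousOn q (uIcc a b) :=
    continuousOn_finsetSum _ fun i _ => continuousOn_const.mul (he i)
  have hhq : ∫ x in a..b, h x * q x = ∑ i ∈ s, c i ^ 2 := by
    simp only [q, integral_mul_finsetSum hh he, sq]
    rfl
  have hqe (i) (hi : i ∈ s) : ∫ x in a..b, q x * e i x = c i := by
    simp_rw [mul_comm (q _)]
    rw [integral_mul_finsetSum (he i) he, Finset.sum_eq_single_of_mem i hi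
      fun j _ hji => by rw [horth hji.symm, mul_zero], hnorm, mul_one]
  have hqq : ∫ x in a..b, q x * q x = ∑ i ∈ s, c i ^ 2 := by
    conv_lhs => enter [1, x, 2]; simp only [q]
    rw [integral_mul_finsetSum hq he]
    exact Finset.sum_congr rfl fun i hi => by rw [hqe i hi, sq]
  have hexpand : ∫ x in a..b, (h x - q x) ^ 2
      = (∫ x in a..b, h x ^ 2) - 2 * (∫ x in a..b, h x * q x) + ∫ x in a..b, q x * q x := by
    have hpoly : (fun x => (h x - q x) ^ 2) = fun x => h x ^ 2 - 2 * (h x * q x) + q x * q x := by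
      ext x; ring
    rw [hpoly, intervalIntegral.integral_add, intervalIntegral.integral_sub,
      intervalIntegral.integral_const_mul]
    all_goals apply ContinuousOn.intervalIntegrable; fun_prop
  calc ∑ i ∈ s, c i ^ 2 = (∫ x in a..b, h x ^ 2) - ∫ x in a..b, (h x - q x) ^ 2 := by
        rw [hexpand, hhq, hqq]; ring
    _ ≤ ∫ x in a..b, h x ^ 2 :=
        sub_le_self _ (intervalIntegral.integral_nonneg hab fun x _ => sq_nonneg _)

end Bessel

theorem integral_cos_int_mul_pi_div {l : ℝ} (hl : l ≠ 0) (p : ℤ) :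
    ∫ x in (0 : ℝ)..l, cos (π * p / l * x) = if p = 0 then l else 0 := by
  split_ifs with hp
  · simp [hp]
  · have hc : π * p / l ≠ 0 := by positivity
    have hpi : π * p / l * l = p * π := by field_simp
    simp [intervalIntegral.integral_comp_mul_left (fun x => cos x) hc, hpi, sin_int_mul_pi]

/-- `fourierFreq l k` is `λ_{k+1}`: the index is shifted so that it ranges over `ℕ`. -/
noncomputable def fourierFreq (l : ℝ) (k : ℕ) : ℝ := π * ((k : ℝ) + 1) / l

noncomputable def sineCoeff (l : ℝ) (g : ℝ → ℝ) (k : ℕ) : ℝ :=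
  √(2 / l) * ∫ x in (0 : ℝ)..l, g x * sin (fourierFreq l k * x)

noncomputable def cosineCoeff (l : ℝ) (g : ℝ → ℝ) (k : ℕ) : ℝ :=
  √(2 / l) * ∫ x in (0 : ℝ)..l, g x * cos (fourierFreq l k * x)

section FourierFreq

variable {l : ℝ}

theorem fourierFreq_pos (hl : 0 < l) (k : ℕ) : 0 < fourierFreq l k := by
  unfold fourierFreq; positivity

theorem sin_fourierFreq_mul_self (hl : l ≠ 0) (k : ℕ) : sin (fourierFreq l k * l) = 0 := by
  have : fourierFreq l k * l = (k + 1 : ℕ) * π := by unfold fourierFreq; field_simp; push_cast; ring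
  rw [this, sin_nat_mul_pi]

theorem integral_cos_fourierFreq_mul_cos_fourierFreq (hl : l ≠ 0) (j k : ℕ) :
    ∫ x in (0 : ℝ)..l, cos (fourierFreq l j * x) * cos (fourierFreq l k * x)
      = if j = k then l / 2 else 0 := by
  have hprod (x : ℝ) : cos (fourierFreq l j * x) * cos (fourierFreq l k * x)
      = cos (π * ((j - k : ℤ) : ℝ) / l * x) / 2 + cos (π * ((j + k + 2 : ℤ) : ℝ) / l * x) / 2 := by
    have hsub : π * ((j - k : ℤ) : ℝ) / l * x = fourierFreq l j * x - fourierFreq l k * x := by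
      unfold fourierFreq; push_cast; ring
    have hadd : π * ((j + k + 2 : ℤ) : ℝ) / l * x = fourierFreq l j * x + fourierFreq l k * x := by
      unfold fourierFreq; push_cast; ring
    rw [hsub, hadd, cos_sub, cos_add]
    ring
  have hint (p : ℤ) : IntervalIntegrable (fun x => cos (π * p / l * x) / 2) volume 0 l :=
    (by fun_prop : Continuous fun x => cos (π * p / l * x) / 2).intervalIntegrable 0 l
  simp_rw [hprod]
  rw [intervalIntegral.integral_add (hint _) (hint _), intervalIntegral.integral_div,
    intervalIntegral.integral_div, integral_cos_int_mul_pi_div hl,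
    integral_cos_int_mul_pi_div hl, if_neg (show (j + k + 2 : ℤ) ≠ 0 by omega)]
  by_cases hjk : j = k
  · simp [hjk]
  · simp [hjk, sub_eq_zero]

theorem sum_range_inv_fourierFreq_sq_le (hl : 0 < l) (n : ℕ) :
    ∑ k ∈ Finset.range n, (fourierFreq l k)⁻¹ ^ 2 ≤ l ^ 2 / 6 := by
  have hzeta : ∑ k ∈ Finset.range n, 1 / ((k : ℝ) + 1) ^ 2 ≤ π ^ 2 / 6 := by
    have := sum_le_hasSum (Finset.range (n + 1)) (fun i _ => by positivity) hasSum_zeta_two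
    simpa [Finset.sum_range_succ'] using this
  calc ∑ k ∈ Finset.range n, (fourierFreq l k)⁻¹ ^ 2
      = (l / π) ^ 2 * ∑ k ∈ Finset.range n, 1 / ((k : ℝ) + 1) ^ 2 := by
        rw [Finset.mul_sum]
        refine Finset.sum_congr rfl fun k _ => ?_
        unfold fourierFreq
        field_simp
    _ ≤ (l / π) ^ 2 * (π ^ 2 / 6) := by gcongr
    _ = l ^ 2 / 6 := by field_simp

end FourierFreq

section FourierCoeff

variable {l : ℝ}

theorem sum_range_cosineCoeff_sq_le (hl : 0 < l) {h : ℝ → ℝ} (hh : ContinuousOn h (Icc 0 l))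
    (n : ℕ) : ∑ k ∈ Finset.range n, cosineCoeff l h k ^ 2 ≤ ∫ x in (0 : ℝ)..l, h x ^ 2 := by
  have hsq (u v : ℝ) : √(2 / l) * u * (√(2 / l) * v) = 2 / l * (u * v) := by
    rw [mul_mul_mul_comm, Real.mul_self_sqrt (by positivity)]
  have he_inner (j k : ℕ) :
      ∫ x in (0 : ℝ)..l,
          √(2 / l) * cos (fourierFreq l j * x) * (√(2 / l) * cos (fourierFreq l k * x))
        = if j = k then 1 else 0 := by
    simp_rw [hsq, intervalIntegral.integral_const_mul,
      integral_cos_fourierFreq_mul_cos_fourierFreq hl.ne']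
    split_ifs
    · field_simp
    · rw [mul_zero]
  have hcoeff (k : ℕ) :
      cosineCoeff l h k = ∫ x in (0 : ℝ)..l, h x * (√(2 / l) * cos (fourierFreq l k * x)) := by
    simp_rw [cosineCoeff, mul_left_comm (h _), intervalIntegral.integral_const_mul]
  simp_rw [hcoeff]
  exact sum_sq_integral_mul_le_integral_sq (e := fun k x => √(2 / l) * cos (fourierFreq l k * x))
    hl.le hh (fun k => by fun_prop)
    (fun k => by simpa using he_inner k k) (fun j k hjk => by simpa [hjk] using he_inner j k) _

theorem sum_range_inv_fourierFreq_mul_abs_cosineCoeff_le (hl : 0 < l) {h : ℝ → ℝ}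
    (hh : ContinuousOn h (Icc 0 l)) (n : ℕ) :
    ∑ k ∈ Finset.range n, (fourierFreq l k)⁻¹ * |cosineCoeff l h k|
      ≤ l / √6 * √(∫ x in (0 : ℝ)..l, h x ^ 2) :=
  calc ∑ k ∈ Finset.range n, (fourierFreq l k)⁻¹ * |cosineCoeff l h k|
      ≤ √(∑ k ∈ Finset.range n, (fourierFreq l k)⁻¹ ^ 2)
          * √(∑ k ∈ Finset.range n, |cosineCoeff l h k| ^ 2) :=
        Real.sum_mul_le_sqrt_mul_sqrt _ _ _
    _ ≤ √(l ^ 2 / 6) * √(∫ x in (0 : ℝ)..l, h x ^ 2) := by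
        simp_rw [sq_abs]
        gcongr
        · exact sum_range_inv_fourierFreq_sq_le hl n
        · exact sum_range_cosineCoeff_sq_le hl hh n
    _ = l / √6 * √(∫ x in (0 : ℝ)..l, h x ^ 2) := by
        rw [Real.sqrt_div' _ (by norm_num), Real.sqrt_sq hl.le]

theorem fourierFreq_sq_mul_abs_sineCoeff (hl : 0 < l) {g : ℝ → ℝ}
    (hg : ContDiffOn ℝ 3 g (Icc 0 l)) (h0 : g 0 = 0) (hl0 : g l = 0)
    (h20 : iteratedDerivWithin 2 g (Icc 0 l) 0 = 0)
    (h2l : iteratedDerivWithin 2 g (Icc 0 l) l = 0) (k : ℕ) :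
    fourierFreq l k ^ 2 * |sineCoeff l g k|
      = (fourierFreq l k)⁻¹ * |cosineCoeff l (iteratedDerivWithin 3 g (Icc 0 l)) k| := by
  have hfreq := fourierFreq_pos hl k
  have hsine : sineCoeff l g k
      = -(fourierFreq l k ^ 3)⁻¹ * cosineCoeff l (iteratedDerivWithin 3 g (Icc 0 l)) k := by
    rw [sineCoeff, cosineCoeff, integral_mul_sin_eq_integral_iteratedDerivWithin_three_mul_cos hl
      hfreq.ne' (by simp) (sin_fourierFreq_mul_self hl.ne' k) hg h0 hl0 h20 h2l]
    ring
  rw [hsine, abs_mul, abs_neg, abs_inv, abs_pow, abs_of_pos hfreq]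
  field_simp

end FourierCoeff

theorem bddAbove_image_sqrt_integral_sq {a b : ℝ} (hab : a ≤ b) {S : Set ℝ} (hS : IsCompact S)
    {F : ℝ → ℝ → ℝ} (hF : ContinuousOn (fun p : ℝ × ℝ => F p.1 p.2) (Icc a b ×ˢ S)) :
    BddAbove ((fun s => √(∫ x in a..b, F x s ^ 2)) '' S) := by
  obtain ⟨M, hM⟩ := (isCompact_Icc.prod hS).exists_bound_of_continuousOn hF
  refine ⟨√(M ^ 2 * |b - a|), ?_⟩
  rintro _ ⟨s, hs, rfl⟩
  refine Real.sqrt_le_sqrt ((le_abs_self _).trans ?_)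
  rw [← Real.norm_eq_abs]
  refine intervalIntegral.norm_integral_le_of_norm_le_const fun x hx => ?_
  rw [uIoc_of_le hab] at hx
  have := hM (x, s) ⟨Ioc_subset_Icc_self hx, hs⟩
  rw [norm_pow]
  gcongr

theorem fourier_coeff_sum_estimate_general (l T : ℝ) (hl : 0 < l)
    (f : ℝ → ℝ → ℝ)
    (hfx : ∀ t ∈ Set.Icc 0 T, ContDiffOn ℝ 3 (fun x => f x t) (Set.Icc 0 l))
    (hf3c : ContinuousOn
      (fun p : ℝ × ℝ => iteratedDerivWithin 3 (fun x => f x p.2) (Set.Icc 0 l) p.1)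
      (Set.Icc 0 l ×ˢ Set.Icc 0 T))
    (hb0 : ∀ t ∈ Set.Icc 0 T, f 0 t = 0)
    (hbl : ∀ t ∈ Set.Icc 0 T, f l t = 0)
    (hb20 : ∀ t ∈ Set.Icc 0 T, iteratedDerivWithin 2 (fun x => f x t) (Set.Icc 0 l) 0 = 0)
    (hb2l : ∀ t ∈ Set.Icc 0 T, iteratedDerivWithin 2 (fun x => f x t) (Set.Icc 0 l) l = 0) :
    ∀ t ∈ Set.Icc 0 T,
      Summable (fun k : ℕ => (π * ((k : ℝ) + 1) / l) ^ 2 *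
        |Real.sqrt (2 / l) * ∫ x in (0:ℝ)..l, f x t * Real.sin (π * ((k : ℝ) + 1) / l * x)|) ∧
      (∑' k : ℕ, (π * ((k : ℝ) + 1) / l) ^ 2 *
          |Real.sqrt (2 / l) * ∫ x in (0:ℝ)..l, f x t * Real.sin (π * ((k : ℝ) + 1) / l * x)|)
        ≤ l / Real.sqrt 6 *
          sSup ((fun s => Real.sqrt (∫ x in (0:ℝ)..l,
            (iteratedDerivWithin 3 (fun y => f y s) (Set.Icc 0 l) x) ^ 2)) '' Set.Icc 0 T) := by
  intro t ht
  have hsup := le_csSup (bddAbove_image_sqrt_integral_sq hl.le isCompact_Icc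
    (F := fun x s => iteratedDerivWithin 3 (f · s) (Icc 0 l) x) hf3c) ⟨t, ht, rfl⟩
  have hbound (n : ℕ) : ∑ k ∈ Finset.range n, fourierFreq l k ^ 2 * |sineCoeff l (f · t) k|
      ≤ l / √6 * sSup ((fun s => √(∫ x in (0:ℝ)..l,
          (iteratedDerivWithin 3 (fun y => f y s) (Icc 0 l) x) ^ 2)) '' Icc 0 T) := by
    simp_rw [fourierFreq_sq_mul_abs_sineCoeff hl (hfx t ht) (hb0 t ht) (hbl t ht) (hb20 t ht)
      (hb2l t ht)]
    refine (sum_range_inv_fourierFreq_mul_abs_cosineCoeff_le hl ?_ n).trans ?_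
    · exact (hfx t ht).continuousOn_iteratedDerivWithin le_rfl (uniqueDiffOn_Icc hl)
    · gcongr
  have hnonneg (k : ℕ) : 0 ≤ fourierFreq l k ^ 2 * |sineCoeff l (f · t) k| := by positivity
  exact ⟨summable_of_sum_range_le hnonneg hbound, Real.tsum_le_of_sum_range_le hnonneg hbound⟩

/-- Lemma 3.8 (first estimate): if `f` is continuous on `[0,l]×[0,T]`, three times
continuously differentiable in `x` with `∂³f/∂x³` jointly continuous, and
`f(0,t) = f(l,t) = ∂²f/∂x²(0,t) = ∂²f/∂x²(l,t) = 0`, then for every `t ∈ [0,T]`,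
`∑_{k=1}^∞ λ_k² |f_k(t)| ≤ (l/√6) ⬝ sup_{s∈[0,T]} ‖∂³f/∂x³(·,s)‖_{L²(0,l)}`,
where `λ_k = πk/l` and `f_k(t) = √(2/l) ∫₀^l f(x,t) sin(λ_k x) dx`. -/
theorem fourier_coeff_sum_estimate (l T : ℝ) (hl : 0 < l) (hT : 0 < T)
    (f : ℝ → ℝ → ℝ)
    (hfc : ContinuousOn (fun p : ℝ × ℝ => f p.1 p.2) (Set.Icc 0 l ×ˢ Set.Icc 0 T))
    (hfx : ∀ t ∈ Set.Icc 0 T, ContDiffOn ℝ 3 (fun x => f x t) (Set.Icc 0 l))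
    (hf3c : ContinuousOn
      (fun p : ℝ × ℝ => iteratedDerivWithin 3 (fun x => f x p.2) (Set.Icc 0 l) p.1)
      (Set.Icc 0 l ×ˢ Set.Icc 0 T))
    (hb0 : ∀ t ∈ Set.Icc 0 T, f 0 t = 0)
    (hbl : ∀ t ∈ Set.Icc 0 T, f l t = 0)
    (hb20 : ∀ t ∈ Set.Icc 0 T, iteratedDerivWithin 2 (fun x => f x t) (Set.Icc 0 l) 0 = 0)
    (hb2l : ∀ t ∈ Set.Icc 0 T, iteratedDerivWithin 2 (fun x => f x t) (Set.Icc 0 l) l = 0) :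
    ∀ t ∈ Set.Icc 0 T,
      Summable (fun k : ℕ => (π * ((k : ℝ) + 1) / l) ^ 2 *
        |Real.sqrt (2 / l) * ∫ x in (0:ℝ)..l, f x t * Real.sin (π * ((k : ℝ) + 1) / l * x)|) ∧
      (∑' k : ℕ, (π * ((k : ℝ) + 1) / l) ^ 2 *
          |Real.sqrt (2 / l) * ∫ x in (0:ℝ)..l, f x t * Real.sin (π * ((k : ℝ) + 1) / l * x)|)
        ≤ l / Real.sqrt 6 *
          sSup ((fun s => Real.sqrt (∫ x in (0:ℝ)..l,
            (iteratedDerivWithin 3 (fun y => f y s) (Set.Icc 0 l) x) ^ 2)) '' Set.Icc 0 T) :=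
  fourier_coeff_sum_estimate_general l T hl f hfx hf3c hb0 hbl hb20 hb2l
end

section
/- Let l > 0, T > 0. (a) If f : [0,l] × [0,T] → ℝ is continuous, four times continuously differentiable in x with ∂⁴f/∂x⁴ continuous on [0,l]×[0,T], and f(0,t) = f(l,t) = ∂²f/∂x²(0,t) = ∂²f/∂x²(l,t) = 0 for all t, then for every t ∈ [0,T]: ∑_{k=1}^∞ λ_k³ |f_k(t)| ≤ (l/√6) (∫₀^l |∂⁴f/∂x⁴(x,t)|² dx)^{1/2}. (b) If φ : [0,l] → ℝ is four times continuously differentiable with φ(0) = φ(l) = φ''(0) = φ''(l) = 0, then ∑_{k=1}^∞ λ_k³ |φ_k| ≤ (l/√6) (∫₀^l |φ⁗(x)|² dx)^{1/2}. -/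
/-!
Integrating by parts four times against `sin (λ_k x)` — the boundary terms vanish because `φ` and
`φ''` vanish at `0` and `l`, and `sin (λ_k l) = 0` — gives `φ_k = λ_k⁻⁴ (φ⁗)_k`, so
`λ_k³ |φ_k| = λ_k⁻¹ |(φ⁗)_k|`. By Cauchy–Schwarz the series is at most
`(∑ λ_k⁻²)^{1/2} (∑ (φ⁗)_k²)^{1/2}`; the first factor is `l / √6` by `∑ 1/k² = π²/6`, and the
second is at most `‖φ⁗‖_{L²(0,l)}` by Bessel's inequality for the orthonormal family
`√(2/l) sin (λ_k x)`.
-/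

open Real Set MeasureTheory intervalIntegral
open scoped ENNReal InnerProductSpace

noncomputable section

namespace FourierSine

theorem integral_cos_mul_eq_zero_of_sin_eq_zero {a b c : ℝ} (hc : c ≠ 0)
    (ha : sin (c * a) = 0) (hb : sin (c * b) = 0) : ∫ x in a..b, cos (c * x) = 0 := by
  simp [integral_comp_mul_left (fun x => cos x) hc, ha, hb]

theorem integral_mul_sin_eq_of_eq_zero {a b c : ℝ} (hc : c ≠ 0) {h h' : ℝ → ℝ}
    (hd : ∀ x ∈ uIcc a b, HasDerivWithinAt h (h' x) (uIcc a b) x)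
    (hint : IntervalIntegrable h' volume a b) (ha : h a = 0) (hb : h b = 0) :
    ∫ x in a..b, h x * sin (c * x) = c⁻¹ * ∫ x in a..b, h' x * cos (c * x) := by
  have hv : ∀ x ∈ uIcc a b,
      HasDerivWithinAt (fun y => -c⁻¹ * cos (c * y)) (sin (c * x)) (uIcc a b) x := by
    intro x _
    refine (((hasDerivAt_id' x).const_mul c).cos.const_mul (-c⁻¹)).hasDerivWithinAt.congr_deriv ?_
    field_simp
  rw [integral_mul_deriv_eq_deriv_mul_of_hasDerivWithinAt hd hv hint
    ((continuous_sin.comp (continuous_const_mul c)).intervalIntegrable a b), ha, hb]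
  simp [mul_left_comm (h' _), intervalIntegral.integral_const_mul]

theorem integral_mul_cos_eq_of_sin_eq_zero {a b c : ℝ} (hc : c ≠ 0) {h h' : ℝ → ℝ}
    (hd : ∀ x ∈ uIcc a b, HasDerivWithinAt h (h' x) (uIcc a b) x)
    (hint : IntervalIntegrable h' volume a b) (ha : sin (c * a) = 0) (hb : sin (c * b) = 0) :
    ∫ x in a..b, h x * cos (c * x) = -c⁻¹ * ∫ x in a..b, h' x * sin (c * x) := by
  have hv : ∀ x ∈ uIcc a b,
      HasDerivWithinAt (fun y => c⁻¹ * sin (c * y)) (cos (c * x)) (uIcc a b) x := by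
    intro x _
    refine (((hasDerivAt_id' x).const_mul c).sin.const_mul c⁻¹).hasDerivWithinAt.congr_deriv ?_
    field_simp
  rw [integral_mul_deriv_eq_deriv_mul_of_hasDerivWithinAt hd hv hint
    ((continuous_cos.comp (continuous_const_mul c)).intervalIntegrable a b), ha, hb]
  simp [mul_left_comm (h' _), intervalIntegral.integral_const_mul]

theorem integral_mul_sin_eq_neg_inv_sq_mul {a b c : ℝ} (hc : c ≠ 0)
    (ha : sin (c * a) = 0) (hb : sin (c * b) = 0) {h h' h'' : ℝ → ℝ}
    (hd : ∀ x ∈ uIcc a b, HasDerivWithinAt h (h' x) (uIcc a b) x)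
    (hd' : ∀ x ∈ uIcc a b, HasDerivWithinAt h' (h'' x) (uIcc a b) x)
    (hint : IntervalIntegrable h'' volume a b) (ha₀ : h a = 0) (hb₀ : h b = 0) :
    ∫ x in a..b, h x * sin (c * x) = -(c ^ 2)⁻¹ * ∫ x in a..b, h'' x * sin (c * x) := by
  have hint' : IntervalIntegrable h' volume a b :=
    ContinuousOn.intervalIntegrable fun x hx => (hd' x hx).continuousWithinAt
  rw [integral_mul_sin_eq_of_eq_zero hc hd hint' ha₀ hb₀,
    integral_mul_cos_eq_of_sin_eq_zero hc hd' hint ha hb]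
  ring

theorem hasDerivWithinAt_iteratedDerivWithin {𝕜 F : Type*} [NontriviallyNormedField 𝕜]
    [NormedAddCommGroup F] [NormedSpace 𝕜 F] {f : 𝕜 → F} {s : Set 𝕜} {n : WithTop ℕ∞}
    (hf : ContDiffOn 𝕜 n f s) (hs : UniqueDiffOn 𝕜 s) {i : ℕ} (hi : (i : WithTop ℕ∞) < n)
    {x : 𝕜} (hx : x ∈ s) :
    HasDerivWithinAt (iteratedDerivWithin i f s) (iteratedDerivWithin (i + 1) f s x) s x := by
  rw [iteratedDerivWithin_succ]
  exact (hf.differentiableOn_iteratedDerivWithin hi hs x hx).hasDerivWithinAt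

theorem integral_mul_sin_eq_inv_pow_four_mul_integral_iteratedDerivWithin {a b c : ℝ}
    (hab : a < b) (hc : c ≠ 0) (ha : sin (c * a) = 0) (hb : sin (c * b) = 0) {φ : ℝ → ℝ}
    (hφ : ContDiffOn ℝ 4 φ (Icc a b)) (ha₀ : φ a = 0) (hb₀ : φ b = 0)
    (ha₂ : iteratedDerivWithin 2 φ (Icc a b) a = 0)
    (hb₂ : iteratedDerivWithin 2 φ (Icc a b) b = 0) :
    ∫ x in a..b, φ x * sin (c * x)
      = (c ^ 4)⁻¹ * ∫ x in a..b, iteratedDerivWithin 4 φ (Icc a b) x * sin (c * x) := by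
  set D : ℕ → ℝ → ℝ := fun i => iteratedDerivWithin i φ (Icc a b)
  have hderiv : ∀ i < 4, ∀ x ∈ uIcc a b, HasDerivWithinAt (D i) (D (i + 1) x) (uIcc a b) x := by
    intro i hi x hx
    rw [uIcc_of_le hab.le] at hx ⊢
    exact hasDerivWithinAt_iteratedDerivWithin hφ (uniqueDiffOn_Icc hab) (by exact_mod_cast hi) hx
  have hint : ∀ i ≤ 4, IntervalIntegrable (D i) volume a b := by
    intro i hi
    refine ContinuousOn.intervalIntegrable ?_
    rw [uIcc_of_le hab.le]
    exact hφ.continuousOn_iteratedDerivWithin (by exact_mod_cast hi) (uniqueDiffOn_Icc hab)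
  have htwice : ∀ i ≤ 2, D i a = 0 → D i b = 0 → ∫ x in a..b, D i x * sin (c * x)
      = -(c ^ 2)⁻¹ * ∫ x in a..b, D (i + 2) x * sin (c * x) := fun i hi ha₀ hb₀ =>
    integral_mul_sin_eq_neg_inv_sq_mul hc ha hb (hderiv i (by omega)) (hderiv (i + 1) (by omega))
      (hint (i + 2) (by omega)) ha₀ hb₀
  have hD0 : D 0 = φ := iteratedDerivWithin_zero
  calc ∫ x in a..b, φ x * sin (c * x) = ∫ x in a..b, D 0 x * sin (c * x) := by rw [hD0]
    _ = -(c ^ 2)⁻¹ * (-(c ^ 2)⁻¹ * ∫ x in a..b, D 4 x * sin (c * x)) := by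
        rw [htwice 0 (by norm_num) (by rwa [hD0]) (by rwa [hD0]), htwice 2 (by norm_num) ha₂ hb₂]
    _ = _ := by ring

/-- `sineFreq l k` is `λ_{k+1}`: the series of the statement start at `k = 0`. -/
def sineFreq (l : ℝ) (k : ℕ) : ℝ := π * ((k : ℝ) + 1) / l

def sineCoeff (l : ℝ) (g : ℝ → ℝ) (k : ℕ) : ℝ :=
  √(2 / l) * ∫ x in (0:ℝ)..l, g x * sin (sineFreq l k * x)

theorem sineFreq_pos {l : ℝ} (hl : 0 < l) (k : ℕ) : 0 < sineFreq l k := by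
  unfold sineFreq; positivity

theorem sin_sineFreq_mul_self {l : ℝ} (hl : l ≠ 0) (k : ℕ) : sin (sineFreq l k * l) = 0 := by
  rw [sineFreq, div_mul_cancel₀ _ hl, mul_comm]
  exact_mod_cast sin_nat_mul_pi (k + 1)

theorem hasSum_inv_sineFreq_sq (l : ℝ) : HasSum (fun k => (sineFreq l k)⁻¹ ^ 2) (l ^ 2 / 6) := by
  have hzeta : HasSum (fun k : ℕ => 1 / ((k : ℝ) + 1) ^ 2) (π ^ 2 / 6) := by
    simpa using (hasSum_nat_add_iff' 1).mpr hasSum_zeta_two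
  have hl2 : l ^ 2 / π ^ 2 * (π ^ 2 / 6) = l ^ 2 / 6 := by field_simp
  rw [← hl2]
  refine (hzeta.mul_left (l ^ 2 / π ^ 2)).congr_fun fun k => ?_
  simp only [sineFreq]
  field_simp

theorem integral_cos_int_mul_pi_div_mul {l : ℝ} (hl : l ≠ 0) {m : ℤ} (hm : m ≠ 0) :
    ∫ x in (0:ℝ)..l, cos (m * π / l * x) = 0 := by
  refine integral_cos_mul_eq_zero_of_sin_eq_zero (by simp [hm, hl, pi_ne_zero]) (by simp) ?_
  rw [div_mul_cancel₀ _ hl]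
  exact sin_int_mul_pi m

theorem integral_sin_sineFreq_mul_sin_sineFreq {l : ℝ} (hl : l ≠ 0) (j k : ℕ) :
    ∫ x in (0:ℝ)..l, sin (sineFreq l j * x) * sin (sineFreq l k * x)
      = if j = k then l / 2 else 0 := by
  have hprod : ∀ x, sin (sineFreq l j * x) * sin (sineFreq l k * x)
      = (cos (((j - k : ℤ) : ℝ) * π / l * x) - cos (((j + k + 2 : ℤ) : ℝ) * π / l * x)) / 2 := by
    intro x
    have hsub : ((j - k : ℤ) : ℝ) * π / l * x = sineFreq l j * x - sineFreq l k * x := by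
      simp only [sineFreq]; push_cast; ring
    have hadd : ((j + k + 2 : ℤ) : ℝ) * π / l * x = sineFreq l j * x + sineFreq l k * x := by
      simp only [sineFreq]; push_cast; ring
    rw [hsub, hadd, cos_sub, cos_add]
    ring
  have hcont : ∀ m : ℤ, IntervalIntegrable (fun x => cos (m * π / l * x)) volume 0 l :=
    fun m => (continuous_cos.comp (continuous_const_mul _)).intervalIntegrable 0 l
  simp_rw [hprod]
  rw [intervalIntegral.integral_div, integral_sub (hcont _) (hcont _),
    integral_cos_int_mul_pi_div_mul hl (m := j + k + 2) (by omega)]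
  split_ifs with hjk
  · simp [hjk]
  · rw [integral_cos_int_mul_pi_div_mul hl (by omega)]
    simp

theorem sineCoeff_eq_inv_pow_four_mul_sineCoeff_iteratedDerivWithin {l : ℝ} (hl : 0 < l)
    {φ : ℝ → ℝ} (hφ : ContDiffOn ℝ 4 φ (Icc 0 l)) (h₀ : φ 0 = 0) (hₗ : φ l = 0)
    (h₀₂ : iteratedDerivWithin 2 φ (Icc 0 l) 0 = 0)
    (hₗ₂ : iteratedDerivWithin 2 φ (Icc 0 l) l = 0) (k : ℕ) :
    sineCoeff l φ k
      = (sineFreq l k ^ 4)⁻¹ * sineCoeff l (iteratedDerivWithin 4 φ (Icc 0 l)) k := by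
  rw [sineCoeff, sineCoeff, integral_mul_sin_eq_inv_pow_four_mul_integral_iteratedDerivWithin hl
    (sineFreq_pos hl k).ne' (by simp) (sin_sineFreq_mul_self hl.ne' k) hφ h₀ hₗ h₀₂ hₗ₂]
  ring

theorem memLp_restrict_Ioc_of_continuousOn {E : Type*} [NormedAddCommGroup E] {a b : ℝ}
    {g : ℝ → E} (hg : ContinuousOn g (Icc a b)) (p : ℝ≥0∞) :
    MemLp g p (volume.restrict (Ioc a b)) := by
  obtain ⟨C, hC⟩ := isCompact_Icc.exists_bound_of_continuousOn hg
  refine MemLp.of_bound ((hg.mono Ioc_subset_Icc_self).aestronglyMeasurable measurableSet_Ioc) C ?_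
  filter_upwards [ae_restrict_mem measurableSet_Ioc] with x hx
  exact hC x (Ioc_subset_Icc_self hx)

theorem inner_toLp_eq_intervalIntegral {a b : ℝ} (hab : a ≤ b) {g₁ g₂ : ℝ → ℝ}
    (h₁ : MemLp g₁ 2 (volume.restrict (Ioc a b))) (h₂ : MemLp g₂ 2 (volume.restrict (Ioc a b))) :
    ⟪h₁.toLp g₁, h₂.toLp g₂⟫_ℝ = ∫ x in a..b, g₁ x * g₂ x := by
  rw [L2.inner_def, integral_of_le hab]
  refine integral_congr_ae ?_
  filter_upwards [h₁.coeFn_toLp, h₂.coeFn_toLp] with x hx₁ hx₂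
  rw [hx₁, hx₂, real_inner_eq_re_inner, RCLike.inner_apply]
  simp [mul_comm]

theorem memLp_sineMode (l : ℝ) (k : ℕ) :
    MemLp (fun x => √(2 / l) * sin (sineFreq l k * x)) 2 (volume.restrict (Ioc 0 l)) :=
  memLp_restrict_Ioc_of_continuousOn (by fun_prop) 2

def sineMode (l : ℝ) (k : ℕ) : Lp ℝ 2 (volume.restrict (Ioc 0 l)) :=
  (memLp_sineMode l k).toLp _

theorem orthonormal_sineMode {l : ℝ} (hl : 0 < l) : Orthonormal ℝ (sineMode l) := by
  rw [orthonormal_iff_ite]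
  intro j k
  rw [sineMode, sineMode, inner_toLp_eq_intervalIntegral hl.le]
  have hsq : √(2 / l) * √(2 / l) = 2 / l := mul_self_sqrt (by positivity)
  calc ∫ x in (0:ℝ)..l, √(2 / l) * sin (sineFreq l j * x) * (√(2 / l) * sin (sineFreq l k * x))
      = 2 / l * ∫ x in (0:ℝ)..l, sin (sineFreq l j * x) * sin (sineFreq l k * x) := by
        rw [← intervalIntegral.integral_const_mul]
        congr 1 with x
        linear_combination sin (sineFreq l j * x) * sin (sineFreq l k * x) * hsq
    _ = if j = k then 1 else 0 := by
        rw [integral_sin_sineFreq_mul_sin_sineFreq hl.ne']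
        split_ifs
        · field_simp
        · simp

theorem sum_sineCoeff_sq_le {l : ℝ} (hl : 0 < l) {g : ℝ → ℝ} (hg : ContinuousOn g (Icc 0 l))
    (s : Finset ℕ) : ∑ k ∈ s, sineCoeff l g k ^ 2 ≤ ∫ x in (0:ℝ)..l, g x ^ 2 := by
  have hg₂ := memLp_restrict_Ioc_of_continuousOn hg 2
  have hcoeff : ∀ k, ⟪sineMode l k, hg₂.toLp g⟫_ℝ = sineCoeff l g k := fun k => by
    rw [sineMode, inner_toLp_eq_intervalIntegral hl.le, sineCoeff,
      ← intervalIntegral.integral_const_mul]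
    congr 1 with x
    ring
  have hnorm : ‖hg₂.toLp g‖ ^ 2 = ∫ x in (0:ℝ)..l, g x ^ 2 := by
    rw [← real_inner_self_eq_norm_sq, inner_toLp_eq_intervalIntegral hl.le]
    simp_rw [sq]
  calc ∑ k ∈ s, sineCoeff l g k ^ 2 = ∑ k ∈ s, ‖⟪sineMode l k, hg₂.toLp g⟫_ℝ‖ ^ 2 := by
        simp_rw [hcoeff, norm_eq_abs, sq_abs]
    _ ≤ ‖hg₂.toLp g‖ ^ 2 := (orthonormal_sineMode hl).sum_inner_products_le _
    _ = ∫ x in (0:ℝ)..l, g x ^ 2 := hnorm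

theorem summable_abs_mul_and_tsum_le_of_sum_sq_le {ι : Type*} {u v : ι → ℝ} {A B : ℝ}
    (hu : ∀ s : Finset ι, ∑ i ∈ s, u i ^ 2 ≤ A) (hv : ∀ s : Finset ι, ∑ i ∈ s, v i ^ 2 ≤ B) :
    Summable (fun i => |u i * v i|) ∧ ∑' i, |u i * v i| ≤ √A * √B := by
  have hpartial : ∀ s : Finset ι, ∑ i ∈ s, |u i * v i| ≤ √A * √B := fun s =>
    calc ∑ i ∈ s, |u i * v i| = ∑ i ∈ s, |u i| * |v i| := by simp_rw [abs_mul]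
      _ ≤ √(∑ i ∈ s, |u i| ^ 2) * √(∑ i ∈ s, |v i| ^ 2) := sum_mul_le_sqrt_mul_sqrt s _ _
      _ ≤ √A * √B := by
        simp_rw [sq_abs]
        gcongr
        exacts [hu s, hv s]
  exact ⟨summable_of_sum_le (fun i => abs_nonneg _) hpartial,
    Real.tsum_le_of_sum_le (fun i => abs_nonneg _) hpartial⟩

theorem summable_sineFreq_pow_three_mul_abs_sineCoeff_and_tsum_le {l : ℝ} (hl : 0 < l)
    {φ : ℝ → ℝ} (hφ : ContDiffOn ℝ 4 φ (Icc 0 l)) (h₀ : φ 0 = 0) (hₗ : φ l = 0)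
    (h₀₂ : iteratedDerivWithin 2 φ (Icc 0 l) 0 = 0)
    (hₗ₂ : iteratedDerivWithin 2 φ (Icc 0 l) l = 0) :
    Summable (fun k => sineFreq l k ^ 3 * |sineCoeff l φ k|) ∧
      ∑' k, sineFreq l k ^ 3 * |sineCoeff l φ k|
        ≤ l / √6 * √(∫ x in (0:ℝ)..l, iteratedDerivWithin 4 φ (Icc 0 l) x ^ 2) := by
  have hterm : (fun k => sineFreq l k ^ 3 * |sineCoeff l φ k|)
      = fun k => |(sineFreq l k)⁻¹ * sineCoeff l (iteratedDerivWithin 4 φ (Icc 0 l)) k| := by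
    ext k
    have hfreq := sineFreq_pos hl k
    rw [sineCoeff_eq_inv_pow_four_mul_sineCoeff_iteratedDerivWithin hl hφ h₀ hₗ h₀₂ hₗ₂,
      abs_mul, abs_mul, abs_of_pos (inv_pos.2 (pow_pos hfreq 4)), abs_of_pos (inv_pos.2 hfreq)]
    field_simp
  have hl6 : √(l ^ 2 / 6) = l / √6 := by rw [sqrt_div' _ (by norm_num), sqrt_sq hl.le]
  rw [hterm, ← hl6]
  exact summable_abs_mul_and_tsum_le_of_sum_sq_le
    (fun s => sum_le_hasSum s (fun k _ => sq_nonneg _) (hasSum_inv_sineFreq_sq l))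
    (sum_sineCoeff_sq_le hl (hφ.continuousOn_iteratedDerivWithin le_rfl (uniqueDiffOn_Icc hl)))

end FourierSine

end

theorem fourier_coeff_cubed_sum_estimates_general (l T : ℝ) (hl : 0 < l)
    (f : ℝ → ℝ → ℝ) (φ : ℝ → ℝ) :
    ((ContinuousOn (fun p : ℝ × ℝ => f p.1 p.2) (Set.Icc 0 l ×ˢ Set.Icc 0 T) ∧
      (∀ t ∈ Set.Icc 0 T, ContDiffOn ℝ 4 (fun x => f x t) (Set.Icc 0 l)) ∧
      ContinuousOn
        (fun p : ℝ × ℝ => iteratedDerivWithin 4 (fun x => f x p.2) (Set.Icc 0 l) p.1)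
        (Set.Icc 0 l ×ˢ Set.Icc 0 T) ∧
      (∀ t ∈ Set.Icc 0 T, f 0 t = 0) ∧
      (∀ t ∈ Set.Icc 0 T, f l t = 0) ∧
      (∀ t ∈ Set.Icc 0 T, iteratedDerivWithin 2 (fun x => f x t) (Set.Icc 0 l) 0 = 0) ∧
      (∀ t ∈ Set.Icc 0 T, iteratedDerivWithin 2 (fun x => f x t) (Set.Icc 0 l) l = 0)) →
      ∀ t ∈ Set.Icc 0 T,
        Summable (fun k : ℕ => (π * ((k : ℝ) + 1) / l) ^ 3 *
          |Real.sqrt (2 / l) *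
            ∫ x in (0:ℝ)..l, f x t * Real.sin (π * ((k : ℝ) + 1) / l * x)|) ∧
        (∑' k : ℕ, (π * ((k : ℝ) + 1) / l) ^ 3 *
            |Real.sqrt (2 / l) *
              ∫ x in (0:ℝ)..l, f x t * Real.sin (π * ((k : ℝ) + 1) / l * x)|)
          ≤ l / Real.sqrt 6 *
            Real.sqrt (∫ x in (0:ℝ)..l,
              (iteratedDerivWithin 4 (fun y => f y t) (Set.Icc 0 l) x) ^ 2)) ∧
    ((ContDiffOn ℝ 4 φ (Set.Icc 0 l) ∧ φ 0 = 0 ∧ φ l = 0 ∧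
      iteratedDerivWithin 2 φ (Set.Icc 0 l) 0 = 0 ∧
      iteratedDerivWithin 2 φ (Set.Icc 0 l) l = 0) →
      Summable (fun k : ℕ => (π * ((k : ℝ) + 1) / l) ^ 3 *
        |Real.sqrt (2 / l) *
          ∫ x in (0:ℝ)..l, φ x * Real.sin (π * ((k : ℝ) + 1) / l * x)|) ∧
      (∑' k : ℕ, (π * ((k : ℝ) + 1) / l) ^ 3 *
          |Real.sqrt (2 / l) *
            ∫ x in (0:ℝ)..l, φ x * Real.sin (π * ((k : ℝ) + 1) / l * x)|)
        ≤ l / Real.sqrt 6 *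
          Real.sqrt (∫ x in (0:ℝ)..l,
            (iteratedDerivWithin 4 φ (Set.Icc 0 l) x) ^ 2)) := by
  constructor
  · rintro ⟨-, hreg, -, h₀, hₗ, h₀₂, hₗ₂⟩ t ht
    exact FourierSine.summable_sineFreq_pow_three_mul_abs_sineCoeff_and_tsum_le hl (hreg t ht)
      (h₀ t ht) (hₗ t ht) (h₀₂ t ht) (hₗ₂ t ht)
  · rintro ⟨hφ, h₀, hₗ, h₀₂, hₗ₂⟩
    exact FourierSine.summable_sineFreq_pow_three_mul_abs_sineCoeff_and_tsum_le hl hφ h₀ hₗ h₀₂ hₗ₂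

/-- Lemma 4.4: (a) if `f` is continuous on `[0,l]×[0,T]`, four times continuously
differentiable in `x` with `∂⁴f/∂x⁴` jointly continuous, and
`f(0,t) = f(l,t) = ∂²f/∂x²(0,t) = ∂²f/∂x²(l,t) = 0`, then
`∑_{k=1}^∞ λ_k³ |f_k(t)| ≤ (l/√6) ‖∂⁴f/∂x⁴(·,t)‖_{L²(0,l)}` for every `t ∈ [0,T]`;
(b) if `φ` is four times continuously differentiable on `[0,l]` with
`φ(0) = φ(l) = φ''(0) = φ''(l) = 0`, then `∑_{k=1}^∞ λ_k³ |φ_k| ≤ (l/√6) ‖φ⁗‖_{L²(0,l)}`. -/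
theorem fourier_coeff_cubed_sum_estimates (l T : ℝ) (hl : 0 < l) (hT : 0 < T)
    (f : ℝ → ℝ → ℝ) (φ : ℝ → ℝ) :
    ((ContinuousOn (fun p : ℝ × ℝ => f p.1 p.2) (Set.Icc 0 l ×ˢ Set.Icc 0 T) ∧
      (∀ t ∈ Set.Icc 0 T, ContDiffOn ℝ 4 (fun x => f x t) (Set.Icc 0 l)) ∧
      ContinuousOn
        (fun p : ℝ × ℝ => iteratedDerivWithin 4 (fun x => f x p.2) (Set.Icc 0 l) p.1)
        (Set.Icc 0 l ×ˢ Set.Icc 0 T) ∧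
      (∀ t ∈ Set.Icc 0 T, f 0 t = 0) ∧
      (∀ t ∈ Set.Icc 0 T, f l t = 0) ∧
      (∀ t ∈ Set.Icc 0 T, iteratedDerivWithin 2 (fun x => f x t) (Set.Icc 0 l) 0 = 0) ∧
      (∀ t ∈ Set.Icc 0 T, iteratedDerivWithin 2 (fun x => f x t) (Set.Icc 0 l) l = 0)) →
      ∀ t ∈ Set.Icc 0 T,
        Summable (fun k : ℕ => (π * ((k : ℝ) + 1) / l) ^ 3 *
          |Real.sqrt (2 / l) *
            ∫ x in (0:ℝ)..l, f x t * Real.sin (π * ((k : ℝ) + 1) / l * x)|) ∧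
        (∑' k : ℕ, (π * ((k : ℝ) + 1) / l) ^ 3 *
            |Real.sqrt (2 / l) *
              ∫ x in (0:ℝ)..l, f x t * Real.sin (π * ((k : ℝ) + 1) / l * x)|)
          ≤ l / Real.sqrt 6 *
            Real.sqrt (∫ x in (0:ℝ)..l,
              (iteratedDerivWithin 4 (fun y => f y t) (Set.Icc 0 l) x) ^ 2)) ∧
    ((ContDiffOn ℝ 4 φ (Set.Icc 0 l) ∧ φ 0 = 0 ∧ φ l = 0 ∧
      iteratedDerivWithin 2 φ (Set.Icc 0 l) 0 = 0 ∧
      iteratedDerivWithin 2 φ (Set.Icc 0 l) l = 0) →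
      Summable (fun k : ℕ => (π * ((k : ℝ) + 1) / l) ^ 3 *
        |Real.sqrt (2 / l) *
          ∫ x in (0:ℝ)..l, φ x * Real.sin (π * ((k : ℝ) + 1) / l * x)|) ∧
      (∑' k : ℕ, (π * ((k : ℝ) + 1) / l) ^ 3 *
          |Real.sqrt (2 / l) *
            ∫ x in (0:ℝ)..l, φ x * Real.sin (π * ((k : ℝ) + 1) / l * x)|)
        ≤ l / Real.sqrt 6 *
          Real.sqrt (∫ x in (0:ℝ)..l,
            (iteratedDerivWithin 4 φ (Set.Icc 0 l) x) ^ 2)) :=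
  fourier_coeff_cubed_sum_estimates_general l T hl f φ
end
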